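/- Let G=(V,w,m) be a connected, locally finite weighted graph with D := Deg_max < ∞. Let f : V → ℝ be harmonic with ‖∇f‖_∞ = 1, let ε > 0, and let x₀ ≠ y₀ be vertices with f(x₀) − f(y₀) ≥ d(x₀,y₀) − ε. Then d(x₀,y₀)·κ(x₀,y₀) ≤ 2Dε. -/

import Mathlib

open scoped BigOperators

/-- A weighted graph `G = (V, w, m)`: a symmetric edge-weight function `w`
vanishing on the diagonal, a positive vertex measure `m`, and local finiteness. -/
structure WeightedGraph (V : Type*) where
  w : V → V → ℝ
  m : V → ℝ
  w_symm : ∀ x y, w x y = w y x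
  w_nonneg : ∀ x y, 0 ≤ w x y
  w_diag : ∀ x, w x x = 0
  m_pos : ∀ x, 0 < m x
  locFin : ∀ x, {y | 0 < w x y}.Finite

namespace WeightedGraph

variable {V : Type*} (G : WeightedGraph V)

/-- Adjacency: `x ~ y` iff `w x y > 0`. -/
def Adj (x y : V) : Prop := 0 < G.w x y

/-- The underlying simple graph. -/
def toSimpleGraph : SimpleGraph V where
  Adj x y := 0 < G.w x y
  symm := by constructor; intro x y h; rw [G.w_symm y x]; exact h
  loopless := by constructor; intro x h; rw [G.w_diag] at h; exact lt_irrefl 0 h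

/-- Combinatorial graph distance. -/
noncomputable def d (x y : V) : ℕ := G.toSimpleGraph.dist x y

/-- Transition rate `q(x,y) = w(x,y)/m(x)`. -/
noncomputable def q (x y : V) : ℝ := G.w x y / G.m x

/-- The graph Laplacian `Δf(x) = Σ_y q(x,y) (f(y) - f(x))`. -/
noncomputable def lap (f : V → ℝ) (x : V) : ℝ := ∑ᶠ y, G.q x y * (f y - f x)

/-- The weighted vertex degree `Deg(x) = Σ_y q(x,y)`. -/
noncomputable def Deg (x : V) : ℝ := ∑ᶠ y, G.q x y

/-- The maximal weighted vertex degree. -/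
noncomputable def DegMax : ℝ := ⨆ x, G.Deg x

/-- The minimal transition rate over edges, `q_min = inf_{x ~ y} q(x,y)`. -/
noncomputable def qMin : ℝ := sInf {r : ℝ | ∃ x y, G.Adj x y ∧ r = G.q x y}

/-- `‖∇f‖_∞ = sup_{x ~ y} (f x - f y)/d(x,y)`. -/
noncomputable def gradNorm (f : V → ℝ) : ℝ :=
  sSup {r : ℝ | ∃ x y, G.Adj x y ∧ r = (f x - f y) / (G.d x y : ℝ)}

/-- The Ollivier curvature
`κ(x,y) = inf { ∇_{xy} Δf : ∇_{yx} f = 1, ‖∇f‖_∞ = 1 }`. -/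
noncomputable def kappa (x y : V) : ℝ :=
  sInf {r : ℝ | ∃ f : V → ℝ,
    (f y - f x) / (G.d y x : ℝ) = 1 ∧ G.gradNorm f = 1 ∧
    r = (G.lap f x - G.lap f y) / (G.d x y : ℝ)}

/-- A function is harmonic if `Δf = 0`. -/
def Harmonic (f : V → ℝ) : Prop := ∀ x, G.lap f x = 0

/-- A transport plan between `x₀ ≠ y₀`: a nonnegative function supported on
`B₁(x₀) × B₁(y₀)` whose marginals on the spheres `S₁(x₀)`, `S₁(y₀)` are
`q(x₀,·)` and `q(y₀,·)` respectively. -/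
def IsTransportPlan (x₀ y₀ : V) (ρ : V → V → ℝ) : Prop :=
  (∀ x y, 0 ≤ ρ x y) ∧
  (∀ x y, ρ x y ≠ 0 → G.d x₀ x ≤ 1 ∧ G.d y₀ y ≤ 1) ∧
  (∀ x, G.d x₀ x = 1 → ∑ᶠ y, ρ x y = G.q x₀ x) ∧
  (∀ y, G.d y₀ y = 1 → ∑ᶠ x, ρ x y = G.q y₀ y)

/-- The transport functional `Σ_{x,y} ρ(x,y) (1 - d(x,y)/d(x₀,y₀))`. -/
noncomputable def transportCost (x₀ y₀ : V) (ρ : V → V → ℝ) : ℝ :=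
  ∑ᶠ x, ∑ᶠ y, ρ x y * (1 - (G.d x y : ℝ) / (G.d x₀ y₀ : ℝ))

/-- An optimal transport plan attains the supremum of the transport functional. -/
def IsOptimalTransportPlan (x₀ y₀ : V) (ρ : V → V → ℝ) : Prop :=
  G.IsTransportPlan x₀ y₀ ρ ∧
  ∀ ρ' : V → V → ℝ, G.IsTransportPlan x₀ y₀ ρ' →
    G.transportCost x₀ y₀ ρ' ≤ G.transportCost x₀ y₀ ρ

end WeightedGraph

/-!
Let `δ = d(x₀,y₀) - (f(x₀) - f(y₀))`, so `0 ≤ δ ≤ ε`. The function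
`g = min (δ - f) (d(x₀,·) - f(x₀))` is 1-Lipschitz and rises by exactly `d(x₀,y₀)` from `x₀`
to `y₀`, so it is a competitor for `κ(x₀,y₀)`. Moreover `-f ≤ g ≤ δ - f`, with `g = -f` at `x₀`
and `g = δ - f` at `y₀`; since `-f` is harmonic, comparing Laplacians gives
`Δg(x₀) ≤ δ Deg(x₀)` and `Δg(y₀) ≥ -δ Deg(y₀)`, whence `d κ ≤ Δg(x₀) - Δg(y₀) ≤ 2 D ε`.
-/

namespace SimpleGraph

variable {V : Type*} {G : SimpleGraph V} {g : V → ℝ}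

theorem Walk.sub_le_length (hg : ∀ a b, G.Adj a b → g a - g b ≤ 1) {u v : V} :
    ∀ p : G.Walk u v, g u - g v ≤ p.length
  | .nil => by simp
  | .cons h p => by
    have := hg _ _ h
    have := p.sub_le_length hg
    push_cast [Walk.length_cons]
    linarith

theorem Walk.exists_adj_sub_eq_one (hg : ∀ a b, G.Adj a b → g a - g b ≤ 1) {u v : V}
    (p : G.Walk u v) (hp : g u - g v = p.length) (hp₀ : p.length ≠ 0) :
    ∃ a b, G.Adj a b ∧ g a - g b = 1 := by
  cases p with
  | nil => exact absurd rfl hp₀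
  | cons h p =>
    have := hg _ _ h
    have := p.sub_le_length hg
    push_cast [Walk.length_cons] at hp
    exact ⟨_, _, h, by linarith⟩

theorem Connected.sub_le_dist (hG : G.Connected) (hg : ∀ a b, G.Adj a b → g a - g b ≤ 1)
    (u v : V) : g u - g v ≤ G.dist u v := by
  obtain ⟨p, hp⟩ := hG.exists_walk_length_eq_dist u v
  exact hp ▸ p.sub_le_length hg

theorem dist_sub_dist_le_one_of_adj {u a b : V} (h : G.Adj a b) :
    (G.dist u a : ℝ) - G.dist u b ≤ 1 := by
  have : G.dist u a ≤ G.dist u b + 1 := by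
    rcases h.symm.diff_dist_adj (u := u) with h' | h' | h' <;> omega
  have : (G.dist u a : ℝ) ≤ G.dist u b + 1 := by exact_mod_cast this
  linarith

end SimpleGraph

namespace WeightedGraph

variable {V : Type*} (G : WeightedGraph V)

theorem q_nonneg (x y : V) : 0 ≤ G.q x y :=
  div_nonneg (G.w_nonneg x y) (G.m_pos x).le

theorem support_q_subset (x : V) : Function.support (G.q x) ⊆ (G.locFin x).toFinset := by
  intro y hy
  by_contra h
  simp only [Set.Finite.coe_toFinset, Set.mem_ofPred_eq, not_lt] at h
  exact hy (by simp [q, le_antisymm h (G.w_nonneg x y)])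

theorem lap_eq_sum (f : V → ℝ) (x : V) :
    G.lap f x = ∑ y ∈ (G.locFin x).toFinset, G.q x y * (f y - f x) :=
  finsum_eq_sum_of_support_subset _
    ((Function.support_mul_subset_left _ _).trans (G.support_q_subset x))

theorem Deg_eq_sum (x : V) : G.Deg x = ∑ y ∈ (G.locFin x).toFinset, G.q x y :=
  finsum_eq_sum_of_support_subset _ (G.support_q_subset x)

theorem Deg_nonneg (x : V) : 0 ≤ G.Deg x := by
  rw [Deg_eq_sum]
  exact Finset.sum_nonneg fun y _ => G.q_nonneg x y

theorem lap_neg (f : V → ℝ) (x : V) : G.lap (fun z => -f z) x = -G.lap f x := by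
  rw [lap, lap, ← finsum_neg_distrib]
  congr with y
  ring

theorem lap_le_lap_add_mul_Deg {g h : V → ℝ} {x : V} {c : ℝ}
    (hgh : ∀ y, G.Adj x y → g y - g x ≤ h y - h x + c) :
    G.lap g x ≤ G.lap h x + c * G.Deg x := by
  rw [lap_eq_sum, lap_eq_sum, Deg_eq_sum, Finset.mul_sum, ← Finset.sum_add_distrib]
  refine Finset.sum_le_sum fun y hy => ?_
  have := mul_le_mul_of_nonneg_left (hgh y ((G.locFin x).mem_toFinset.1 hy)) (G.q_nonneg x y)
  linarith

theorem d_eq_one_of_adj {x y : V} (h : G.Adj x y) : G.d x y = 1 :=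
  SimpleGraph.dist_eq_one_iff_adj.2 h

theorem gradNorm_eq_sSup (g : V → ℝ) :
    G.gradNorm g = sSup {r | ∃ x y, G.Adj x y ∧ r = g x - g y} := by
  unfold gradNorm
  congr 1
  ext r
  constructor <;> rintro ⟨x, y, hxy, rfl⟩ <;>
    exact ⟨x, y, hxy, by rw [G.d_eq_one_of_adj hxy, Nat.cast_one, div_one]⟩

variable {G}

theorem sub_le_one_of_gradNorm_eq_one {g : V → ℝ} (hg : G.gradNorm g = 1) :
    ∀ a b, G.toSimpleGraph.Adj a b → g a - g b ≤ 1 := by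
  rw [gradNorm_eq_sSup] at hg
  have hbdd : BddAbove {r | ∃ x y, G.Adj x y ∧ r = g x - g y} := by
    by_contra h
    rw [Real.sSup_of_not_bddAbove h] at hg
    exact zero_ne_one hg
  exact fun a b hab => hg ▸ le_csSup hbdd ⟨a, b, hab, rfl⟩

theorem gradNorm_eq_one_of_sub_eq_d {g : V → ℝ} {u v : V}
    (hg : ∀ a b, G.toSimpleGraph.Adj a b → g a - g b ≤ 1)
    (hd : G.d u v ≠ 0) (huv : g u - g v = G.d u v) : G.gradNorm g = 1 := by
  obtain ⟨p, hp⟩ := SimpleGraph.exists_walk_of_dist_ne_zero hd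
  obtain ⟨a, b, hab, hab_eq⟩ :=
    p.exists_adj_sub_eq_one hg (by rw [huv, hp]; rfl) (by rw [hp]; exact hd)
  rw [gradNorm_eq_sSup]
  refine IsGreatest.csSup_eq ⟨⟨a, b, hab, hab_eq.symm⟩, ?_⟩
  rintro r ⟨x, y, hxy, rfl⟩
  exact hg x y hxy

theorem mul_kappa_le {g : V → ℝ} {x y : V} {c : ℝ}
    (hg : ∀ a b, G.toSimpleGraph.Adj a b → g a - g b ≤ 1)
    (hd : G.d x y ≠ 0) (hgxy : g y - g x = G.d x y) (hc : 0 ≤ c)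
    (hlap : G.lap g x - G.lap g y ≤ c) : G.d x y * G.kappa x y ≤ c := by
  have hdyx : G.d y x = G.d x y := SimpleGraph.dist_comm
  have hdR : (0 : ℝ) < G.d x y := by positivity
  unfold kappa
  -- an `sInf` of a set unbounded below is the junk value `0`, hence `0 ≤ c`
  by_cases hbdd : BddBelow {r : ℝ | ∃ f : V → ℝ, (f y - f x) / (G.d y x : ℝ) = 1 ∧
      G.gradNorm f = 1 ∧ r = (G.lap f x - G.lap f y) / (G.d x y : ℝ)}
  · have hmem := csInf_le hbdd ⟨g, by rw [hdyx, hgxy, div_self hdR.ne'],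
      gradNorm_eq_one_of_sub_eq_d hg (hdyx ▸ hd) (hdyx ▸ hgxy), rfl⟩
    calc (G.d x y : ℝ) * _ ≤ G.d x y * ((G.lap g x - G.lap g y) / G.d x y) :=
          mul_le_mul_of_nonneg_left hmem hdR.le
      _ = G.lap g x - G.lap g y := mul_div_cancel₀ _ hdR.ne'
      _ ≤ c := hlap
  · rwa [Real.sInf_of_not_bddBelow hbdd, mul_zero]

section AlmostRigidTest

variable {f : V → ℝ} {x₀ : V} {δ : ℝ}

variable (G) in
noncomputable def almostRigidTest (f : V → ℝ) (x₀ : V) (δ : ℝ) (z : V) : ℝ :=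
  min (δ - f z) (G.d x₀ z - f x₀)

theorem almostRigidTest_sub_le_one (hf : ∀ a b, G.toSimpleGraph.Adj a b → f a - f b ≤ 1)
    (a b : V) (hab : G.toSimpleGraph.Adj a b) :
    G.almostRigidTest f x₀ δ a - G.almostRigidTest f x₀ δ b ≤ 1 := by
  have h₁ : δ - f a ≤ δ - f b + 1 := by linarith [hf b a hab.symm]
  have hd : (G.d x₀ a : ℝ) - G.d x₀ b ≤ 1 := SimpleGraph.dist_sub_dist_le_one_of_adj hab
  have h₂ : (G.d x₀ a : ℝ) - f x₀ ≤ G.d x₀ b - f x₀ + 1 := by linarith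
  rw [sub_le_iff_le_add', almostRigidTest, almostRigidTest, ← min_add_add_right]
  exact min_le_min h₁ h₂

theorem almostRigidTest_le (z : V) : G.almostRigidTest f x₀ δ z ≤ δ - f z :=
  min_le_left _ _

theorem neg_le_almostRigidTest (hconn : G.toSimpleGraph.Connected)
    (hf : ∀ a b, G.toSimpleGraph.Adj a b → f a - f b ≤ 1) (hδ : 0 ≤ δ) (z : V) :
    -f z ≤ G.almostRigidTest f x₀ δ z :=
  le_min (by linarith) (by
    have : f x₀ - f z ≤ G.d x₀ z := hconn.sub_le_dist hf x₀ z
    linarith)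

theorem almostRigidTest_self (hδ : 0 ≤ δ) : G.almostRigidTest f x₀ δ x₀ = -f x₀ := by
  simp only [almostRigidTest, d, SimpleGraph.dist_self, Nat.cast_zero, zero_sub]
  exact min_eq_right (by linarith)

theorem almostRigidTest_of_defect_eq {y₀ : V} (hδ : δ = G.d x₀ y₀ - (f x₀ - f y₀)) :
    G.almostRigidTest f x₀ δ y₀ = δ - f y₀ := by
  rw [almostRigidTest, show (G.d x₀ y₀ : ℝ) - f x₀ = δ - f y₀ by rw [hδ]; ring, min_self]

theorem lap_almostRigidTest_sub_le (hconn : G.toSimpleGraph.Connected) (hharm : G.Harmonic f)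
    (hf : ∀ a b, G.toSimpleGraph.Adj a b → f a - f b ≤ 1) {y₀ : V}
    (hδ_eq : δ = G.d x₀ y₀ - (f x₀ - f y₀)) (hδ : 0 ≤ δ) :
    G.lap (G.almostRigidTest f x₀ δ) x₀ - G.lap (G.almostRigidTest f x₀ δ) y₀ ≤
      δ * (G.Deg x₀ + G.Deg y₀) := by
  have hx₀ : G.lap (G.almostRigidTest f x₀ δ) x₀ ≤ G.lap (fun z => -f z) x₀ + δ * G.Deg x₀ :=
    G.lap_le_lap_add_mul_Deg fun y _ => by
      have := almostRigidTest_le (G := G) (f := f) (x₀ := x₀) (δ := δ) y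
      rw [almostRigidTest_self hδ]
      linarith
  have hy₀ : G.lap (fun z => -f z) y₀ ≤ G.lap (G.almostRigidTest f x₀ δ) y₀ + δ * G.Deg y₀ :=
    G.lap_le_lap_add_mul_Deg fun y _ => by
      have := neg_le_almostRigidTest (x₀ := x₀) hconn hf hδ y
      rw [almostRigidTest_of_defect_eq hδ_eq]
      linarith
  rw [lap_neg, hharm] at hx₀ hy₀
  linarith

end AlmostRigidTest

end WeightedGraph

theorem dist_mul_kappa_le_of_almost_rigid_general
    {V : Type*} (G : WeightedGraph V)
    (hconn : G.toSimpleGraph.Connected)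
    (hDeg : BddAbove (Set.range G.Deg))
    (f : V → ℝ) (hharm : G.Harmonic f) (hgrad : G.gradNorm f = 1)
    (ε : ℝ)
    (x₀ y₀ : V) (hxy : x₀ ≠ y₀)
    (hfd : (G.d x₀ y₀ : ℝ) - ε ≤ f x₀ - f y₀) :
    (G.d x₀ y₀ : ℝ) * G.kappa x₀ y₀ ≤ 2 * G.DegMax * ε := by
  have hf := WeightedGraph.sub_le_one_of_gradNorm_eq_one hgrad
  set δ : ℝ := G.d x₀ y₀ - (f x₀ - f y₀) with hδ_eq
  have hδ : 0 ≤ δ := sub_nonneg.2 (hconn.sub_le_dist hf x₀ y₀)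
  have hDx : G.Deg x₀ ≤ G.DegMax := le_ciSup hDeg x₀
  have hDy : G.Deg y₀ ≤ G.DegMax := le_ciSup hDeg y₀
  have hDx₀ := G.Deg_nonneg x₀
  have hDy₀ := G.Deg_nonneg y₀
  refine WeightedGraph.mul_kappa_le
    (WeightedGraph.almostRigidTest_sub_le_one (x₀ := x₀) (δ := δ) hf)
    (hconn.pos_dist_of_ne hxy).ne' ?_ ?_ ?_
  · rw [WeightedGraph.almostRigidTest_of_defect_eq hδ_eq, WeightedGraph.almostRigidTest_self hδ]
    ring
  · have : 0 ≤ ε := by linarith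
    have : 0 ≤ G.DegMax := hDx₀.trans hDx
    positivity
  · calc _ ≤ δ * (G.Deg x₀ + G.Deg y₀) :=
          WeightedGraph.lap_almostRigidTest_sub_le hconn hharm hf hδ_eq hδ
      _ ≤ ε * (2 * G.DegMax) := mul_le_mul (by linarith) (by linarith) (by linarith) (by linarith)
      _ = 2 * G.DegMax * ε := by ring

/-- If `f` is harmonic with `‖∇f‖_∞ = 1`, `ε > 0`, and
`f(x₀) - f(y₀) ≥ d(x₀,y₀) - ε` for `x₀ ≠ y₀`, then on a graph with
`D = Deg_max < ∞` one has `d(x₀,y₀) κ(x₀,y₀) ≤ 2 D ε`. -/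
theorem dist_mul_kappa_le_of_almost_rigid
    {V : Type*} [Countable V] (G : WeightedGraph V)
    (hconn : G.toSimpleGraph.Connected)
    (hDeg : BddAbove (Set.range G.Deg))
    (f : V → ℝ) (hharm : G.Harmonic f) (hgrad : G.gradNorm f = 1)
    (ε : ℝ) (hε : 0 < ε)
    (x₀ y₀ : V) (hxy : x₀ ≠ y₀)
    (hfd : (G.d x₀ y₀ : ℝ) - ε ≤ f x₀ - f y₀) :
    (G.d x₀ y₀ : ℝ) * G.kappa x₀ y₀ ≤ 2 * G.DegMax * ε :=
  dist_mul_kappa_le_of_almost_rigid_general G hconn hDeg f hharm hgrad ε x₀ y₀ hxy hfd
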